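/- Let $n \geq 3$ and $2 \leq m \leq n-1$. Let $b_k$, $m+1 \leq k \leq 2m$, be homogeneous polynomials of degree $k$ in $z_1,\ldots,z_n$, and let $f(t_0,\ldots,t_n) = t_0^{2m} + \sum_{k=m+1}^{2m} t_0^{2m-k} b_k(t_1,\ldots,t_n)$. Then for the point $y = 0 \in \mathbb{C}^n$ (i.e., $[1:0:\cdots:0] \in \mathbb{P}^n$), a direction $[z] \in \mathbb{P}^{n-1}$ gives an ECO line through $y$ with respect to $\{f = 0\}$ if and only if $b_{m+1}(z) = b_{m+2}(z) = \cdots = b_{2m}(z) = 0$; i.e., the variety of ECO directions at $y$ is the common zero locus of $b_{m+1},\ldots,b_{2m}$, a subvariety of $\mathbb{P}^{n-1}$ cut out by equations of degrees $m+1, m+2, \ldots, 2m$. -/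

import Mathlib

open Polynomial Finset

/-!
Along the line `λ ↦ λz` every `b_k` restricts to `b_k(z) λ^k`, so the restriction of `f` is
`1 + S` with `S` divisible by `λ^(m+1)`. If `1 + S = h²` with `deg h ≤ m`, then `c := h(0)`
satisfies `c² = 1` and `λ^(m+1) ∣ (h - c)(h + c)`; since `h + c` has constant term `2c ≠ 0`,
it is prime to `λ`, so `λ^(m+1)` divides `h - c`, which has degree at most `m`. Hence `h = c`,
`S = 0`, and all `b_k(z)` vanish.
-/

namespace MvPolynomial

lemma IsHomogeneous.aeval_C_mul_X {σ R : Type*} [CommSemiring R] [Fintype σ]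
    {p : MvPolynomial σ R} {k : ℕ} (hp : p.IsHomogeneous k) (z : σ → R) :
    MvPolynomial.aeval (fun j => Polynomial.C (z j) * Polynomial.X) p
      = Polynomial.C (eval z p) * Polynomial.X ^ k := by
  rw [aeval_def, eval₂_eq', eval_eq', map_sum, Finset.sum_mul]
  refine Finset.sum_congr rfl fun d hd => ?_
  have hdeg : ∑ i, d i = k := by
    simpa [Finsupp.weight_apply, Finsupp.sum_fintype] using hp (mem_support_iff.mp hd)
  simp only [mul_pow, Finset.prod_mul_distrib, Finset.prod_pow_eq_pow_sum, hdeg,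
    Polynomial.algebraMap_eq, map_mul, map_prod, map_pow]
  ring

end MvPolynomial

namespace Polynomial

lemma coeff_sum_C_mul_X_pow {R : Type*} [Semiring R] (s : Finset ℕ) (a : ℕ → R) (k : ℕ) :
    (∑ j ∈ s, C (a j) * X ^ j).coeff k = if k ∈ s then a k else 0 := by
  simp only [finsetSum_coeff, coeff_C_mul_X_pow, Finset.sum_ite_eq]

lemma sq_eq_one_of_X_pow_dvd_sq_sub_one {K : Type*} [Field K] [NeZero (2 : K)] {h : K[X]}
    {m : ℕ} (hdeg : h.natDegree ≤ m) (hdvd : X ^ (m + 1) ∣ h ^ 2 - 1) : h ^ 2 = 1 := by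
  set c := h.eval 0
  have hc : c ^ 2 = 1 := by
    have hX : X ∣ h ^ 2 - 1 := (dvd_pow_self X m.succ_ne_zero).trans hdvd
    rw [X_dvd_iff, coeff_zero_eq_eval_zero] at hX
    simpa [sub_eq_zero] using hX
  have hfactor : h ^ 2 - 1 = (h - C c) * (h + C c) := by
    have hC : C c ^ 2 = 1 := by rw [← C_pow, hc, C_1]
    linear_combination hC
  have hcop : IsCoprime (X ^ (m + 1)) (h + C c) := by
    refine (irreducible_X.coprime_iff_not_dvd.2 ?_).pow_left
    have hc0 : c ≠ 0 := by rintro hc0; simp [hc0] at hc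
    rw [X_dvd_iff, coeff_zero_eq_eval_zero, eval_add, eval_C, ← two_mul]
    exact mul_ne_zero two_ne_zero hc0
  have hconst : h - C c = 0 := by
    refine eq_zero_of_dvd_of_natDegree_lt (hcop.dvd_of_dvd_mul_right (hfactor ▸ hdvd)) ?_
    rw [natDegree_X_pow]
    exact (natDegree_sub_le _ _).trans_lt (by simp [hdeg])
  rw [sub_eq_zero.1 hconst, ← C_pow, hc, C_1]

end Polynomial

theorem stmt19_general (n m : ℕ)
    (b : ℕ → MvPolynomial (Fin n) ℂ)
    (hb : ∀ k ∈ Finset.Icc (m + 1) (2 * m), (b k).IsHomogeneous k) :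
    let f : MvPolynomial (Fin (n + 1)) ℂ :=
      MvPolynomial.X 0 ^ (2 * m) + ∑ k ∈ Finset.Icc (m + 1) (2 * m),
        MvPolynomial.X 0 ^ (2 * m - k) * MvPolynomial.rename Fin.succ (b k)
    ∀ z : Fin n → ℂ,
      ((∃ h : Polynomial ℂ, h.natDegree ≤ m ∧
          MvPolynomial.aeval (Fin.cons (1 : Polynomial ℂ)
            (fun j => Polynomial.C (z j) * Polynomial.X)) f = h ^ 2) ↔
        ∀ k ∈ Finset.Icc (m + 1) (2 * m), MvPolynomial.eval z (b k) = 0) := by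
  intro f z
  set S : ℂ[X] := ∑ k ∈ Icc (m + 1) (2 * m), C (MvPolynomial.eval z (b k)) * X ^ k
  have hline : MvPolynomial.aeval (Fin.cons (1 : ℂ[X]) fun j => C (z j) * X) f = 1 + S := by
    simp only [f, S, map_add, map_sum, map_mul, map_pow, MvPolynomial.aeval_X, Fin.cons_zero,
      one_pow, one_mul, MvPolynomial.aeval_rename]
    exact congrArg _ (sum_congr rfl fun k hk => MvPolynomial.IsHomogeneous.aeval_C_mul_X (hb k hk) z)
  rw [hline]
  constructor
  · rintro ⟨h, hdeg, hsq⟩ k hk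
    have hS : X ^ (m + 1) ∣ S :=
      dvd_sum fun k hk => (pow_dvd_pow X (mem_Icc.1 hk).1).mul_left _
    have hS0 : S = 0 := by
      have h2 := sq_eq_one_of_X_pow_dvd_sq_sub_one hdeg (by rwa [← hsq, add_sub_cancel_left])
      rwa [h2, add_eq_left] at hsq
    simpa [S, coeff_sum_C_mul_X_pow, hk] using congrArg (coeff · k) hS0
  · intro hz
    refine ⟨1, natDegree_one.trans_le m.zero_le, ?_⟩
    have hS0 : S = 0 := sum_eq_zero fun k hk => by rw [hz k hk, C_0, zero_mul]
    rw [hS0, add_zero, one_pow]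

/-- Let `f = t_0^{2m} + ∑_{k=m+1}^{2m} t_0^{2m-k} b_k(t_1,…,t_n)` with `b_k` homogeneous
of degree `k`. For the point `y = 0` (i.e. `[1:0:⋯:0] ∈ ℙ^n`), a direction `z` gives an
ECO line with respect to `{f = 0}` — i.e. `λ ↦ f(1, λz)` is an ECO polynomial, the
square of a polynomial of degree at most `m` — if and only if
`b_{m+1}(z) = ⋯ = b_{2m}(z) = 0`: the variety of ECO directions at `y` is the common
zero locus of `b_{m+1},…,b_{2m}`, cut out by equations of degrees `m+1,…,2m`. -/
theorem stmt19 (n m : ℕ) (hn : 3 ≤ n) (hm : 2 ≤ m) (hmn : m ≤ n - 1)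
    (b : ℕ → MvPolynomial (Fin n) ℂ)
    (hb : ∀ k ∈ Finset.Icc (m + 1) (2 * m), (b k).IsHomogeneous k) :
    let f : MvPolynomial (Fin (n + 1)) ℂ :=
      MvPolynomial.X 0 ^ (2 * m) + ∑ k ∈ Finset.Icc (m + 1) (2 * m),
        MvPolynomial.X 0 ^ (2 * m - k) * MvPolynomial.rename Fin.succ (b k)
    ∀ z : Fin n → ℂ,
      ((∃ h : Polynomial ℂ, h.natDegree ≤ m ∧
          MvPolynomial.aeval (Fin.cons (1 : Polynomial ℂ)
            (fun j => Polynomial.C (z j) * Polynomial.X)) f = h ^ 2) ↔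
        ∀ k ∈ Finset.Icc (m + 1) (2 * m), MvPolynomial.eval z (b k) = 0) :=
  stmt19_general n m b hb
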